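/- Let P and Q be probability measures on the same measurable space and A a measurable event with complement A^c. Then P(A) + Q(A^c) ≥ (1/2) F(P,Q), where F(P,Q) = (∫ √(pq) dμ)^2 is the squared Bhattacharyya coefficient. -/

import Mathlib

open MeasureTheory Real
open scoped ENNReal

/-! With `p, q` the densities of `P, Q` with respect to `μ`, Cauchy–Schwarz on `A` gives
`∫_A √(pq) ≤ √P(A) √Q(A) ≤ √P(A)`, and likewise `∫_{Aᶜ} √(pq) ≤ √Q(Aᶜ)`. Hence
`∫ √(pq) ≤ √P(A) + √Q(Aᶜ)`, and squaring with `(a + b)² ≤ 2 (a² + b²)` gives the bound. -/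

namespace MeasureTheory.Measure

variable {Ω : Type*} [MeasurableSpace Ω] {P Q μ : Measure Ω}

lemma memLp_two_sqrt_toReal_rnDeriv (P μ : Measure Ω) [IsFiniteMeasure P] :
    MemLp (fun x ↦ √(P.rnDeriv μ x).toReal) 2 μ := by
  refine (memLp_two_iff_integrable_sq
    (P.measurable_rnDeriv μ).ennreal_toReal.sqrt.aestronglyMeasurable).2 ?_
  simpa only [sq_sqrt ENNReal.toReal_nonneg] using P.integrable_toReal_rnDeriv (ν := μ)

lemma integrable_sqrt_toReal_rnDeriv_mul (P Q μ : Measure Ω) [IsFiniteMeasure P]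
    [IsFiniteMeasure Q] :
    Integrable (fun x ↦ √((P.rnDeriv μ x).toReal * (Q.rnDeriv μ x).toReal)) μ := by
  simp only [sqrt_mul ENNReal.toReal_nonneg]
  exact (memLp_two_sqrt_toReal_rnDeriv P μ).integrable_mul (memLp_two_sqrt_toReal_rnDeriv Q μ)

lemma setIntegral_sqrt_toReal_rnDeriv_sq [IsFiniteMeasure P] [SigmaFinite μ] (hPμ : P ≪ μ)
    (s : Set Ω) : ∫ x in s, √(P.rnDeriv μ x).toReal ^ (2 : ℝ) ∂μ = P.real s := by
  simp only [rpow_two, sq_sqrt ENNReal.toReal_nonneg, setIntegral_toReal_rnDeriv hPμ]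

lemma setIntegral_sqrt_toReal_rnDeriv_mul_le [IsFiniteMeasure P] [IsFiniteMeasure Q]
    [SigmaFinite μ] (hPμ : P ≪ μ) (hQμ : Q ≪ μ) (s : Set Ω) :
    ∫ x in s, √((P.rnDeriv μ x).toReal * (Q.rnDeriv μ x).toReal) ∂μ ≤
      √(P.real s) * √(Q.real s) := by
  have hL2 : ENNReal.ofReal 2 = 2 := by norm_num
  have := integral_mul_le_Lp_mul_Lq_of_nonneg (μ := μ.restrict s) Real.HolderConjugate.two_two
    (ae_of_all _ fun x ↦ sqrt_nonneg (P.rnDeriv μ x).toReal)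
    (ae_of_all _ fun x ↦ sqrt_nonneg (Q.rnDeriv μ x).toReal)
    (hL2 ▸ (memLp_two_sqrt_toReal_rnDeriv P μ).restrict s)
    (hL2 ▸ (memLp_two_sqrt_toReal_rnDeriv Q μ).restrict s)
  rw [setIntegral_sqrt_toReal_rnDeriv_sq hPμ, setIntegral_sqrt_toReal_rnDeriv_sq hQμ] at this
  simpa only [sqrt_mul ENNReal.toReal_nonneg, sqrt_eq_rpow, one_div] using this

lemma integral_sqrt_toReal_rnDeriv_mul_le [IsProbabilityMeasure P] [IsProbabilityMeasure Q]
    [SigmaFinite μ] (hPμ : P ≪ μ) (hQμ : Q ≪ μ) {A : Set Ω} (hA : MeasurableSet A) :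
    ∫ x, √((P.rnDeriv μ x).toReal * (Q.rnDeriv μ x).toReal) ∂μ ≤
      √(P.real A) + √(Q.real Aᶜ) := by
  rw [← integral_add_compl hA (integrable_sqrt_toReal_rnDeriv_mul P Q μ)]
  gcongr
  · calc _ ≤ √(P.real A) * √(Q.real A) := setIntegral_sqrt_toReal_rnDeriv_mul_le hPμ hQμ A
      _ ≤ √(P.real A) * 1 := by gcongr; exact sqrt_le_one.2 measureReal_le_one
      _ = _ := mul_one _
  · calc _ ≤ √(P.real Aᶜ) * √(Q.real Aᶜ) := setIntegral_sqrt_toReal_rnDeriv_mul_le hPμ hQμ Aᶜ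
      _ ≤ 1 * √(Q.real Aᶜ) := by gcongr; exact sqrt_le_one.2 measureReal_le_one
      _ = _ := one_mul _

end MeasureTheory.Measure

/-- For probability measures `P, Q` with densities `p, q` w.r.t. the dominating
probability measure `μ = (P+Q)/2`, and any measurable event `A`,
`P(A) + Q(Aᶜ) ≥ (1/2) F(P,Q)` where `F(P,Q) = (∫ √(p q) dμ)²` is the squared
Bhattacharyya coefficient. -/
theorem bretagnolle_huber_bhattacharyya {Ω : Type*} [MeasurableSpace Ω]
    (P Q : Measure Ω) [IsProbabilityMeasure P] [IsProbabilityMeasure Q]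
    (A : Set Ω) (hA : MeasurableSet A) :
    (P A).toReal + (Q Aᶜ).toReal ≥
      (1 / 2) * (∫ x, Real.sqrt ((P.rnDeriv ((2 : ℝ≥0∞)⁻¹ • (P + Q)) x).toReal *
        (Q.rnDeriv ((2 : ℝ≥0∞)⁻¹ • (P + Q)) x).toReal) ∂((2 : ℝ≥0∞)⁻¹ • (P + Q))) ^ 2 := by
  set μ := (2 : ℝ≥0∞)⁻¹ • (P + Q)
  have : IsFiniteMeasure μ := (P + Q).smul_finite (by simp)
  have hPμ : P ≪ μ := (Measure.AbsolutelyContinuous.rfl.add_right Q).smul_right (by simp)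
  have hQμ : Q ≪ μ := (Measure.AbsolutelyContinuous.rfl.add_right' P).smul_right (by simp)
  have hB := Measure.integral_sqrt_toReal_rnDeriv_mul_le hPμ hQμ hA
  rw [ge_iff_le, ← measureReal_def, ← measureReal_def]
  calc _ ≤ (1 / 2) * (√(P.real A) + √(Q.real Aᶜ)) ^ 2 := by gcongr
    _ ≤ (1 / 2) * (2 * (√(P.real A) ^ 2 + √(Q.real Aᶜ) ^ 2)) := by gcongr; exact add_sq_le
    _ = P.real A + Q.real Aᶜ := by simp [sq_sqrt measureReal_nonneg]
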